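/- arXiv:2511.21442 — 7 statements merged into one kernel-verified Lean document; each statement's English description precedes it below -/
import Mathlib

section
/- Let K be an algebraically closed field and let k ≥ 1 and n ≥ 2k. Then there exist a k×n matrix X over K of rank k and λ ∈ (K^*)^n such that X·diag(λ)·Xᵀ = 0. (Equivalently, the set of self-projecting points of Gr(k,n) is nonempty when n ≥ 2k.) -/
/-!
The columns of `[I | I | 0]` weighted by `(1, …, 1, -1, …, -1, 1, …, 1)` give
`I Iᵀ - I Iᵀ + 0 = 0`, and `[I | I | 0]` has full row rank because `[I | 0 | 0]ᵀ` is a right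
inverse.
-/

namespace Matrix

section Semiring

variable {R : Type*} [Semiring R] {m n n₁ n₂ : Type*}

lemma fromCols_mul_diagonal_mul_transpose [Fintype n₁] [Fintype n₂] [DecidableEq n₁]
    [DecidableEq n₂] (A₁ : Matrix m n₁ R) (A₂ : Matrix m n₂ R) (d₁ : n₁ → R) (d₂ : n₂ → R) :
    fromCols A₁ A₂ * diagonal (Sum.elim d₁ d₂) * (fromCols A₁ A₂)ᵀ =
      A₁ * diagonal d₁ * A₁ᵀ + A₂ * diagonal d₂ * A₂ᵀ := by
  rw [← fromBlocks_diagonal, transpose_fromCols, fromCols_mul_fromBlocks, fromCols_mul_fromRows]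
  simp

lemma submatrix_mul_diagonal_mul_transpose [Fintype n] [DecidableEq n] {n' : Type*}
    [Fintype n'] [DecidableEq n'] (A : Matrix m n R) (d : n → R) (e : n' ≃ n) :
    A.submatrix id e * diagonal (d ∘ e) * (A.submatrix id e)ᵀ = A * diagonal d * Aᵀ := by
  rw [← submatrix_diagonal_equiv, transpose_submatrix, submatrix_mul_equiv _ _ _ e,
    submatrix_mul_equiv _ _ _ e]
  rfl

end Semiring

lemma rank_eq_card_of_mul_eq_one {R : Type*} [CommSemiring R] [StrongRankCondition R]
    {m n : Type*} [Fintype m] [DecidableEq m] [Fintype n] {A : Matrix m n R} {B : Matrix n m R}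
    (h : A * B = 1) : A.rank = Fintype.card m :=
  le_antisymm A.rank_le_card_height <| by
    simpa [h, rank_one] using A.rank_mul_le_left B

end Matrix

open Matrix

theorem exists_selfProjecting_of_two_mul_card_le {K : Type*} [Field K] {m n : Type*}
    [Fintype m] [DecidableEq m] [Fintype n] [DecidableEq n]
    (h : 2 * Fintype.card m ≤ Fintype.card n) :
    ∃ (X : Matrix m n K) (lam : n → K),
      X.rank = Fintype.card m ∧ (∀ i, lam i ≠ 0) ∧ X * diagonal lam * Xᵀ = 0 := by
  let p := Fin (Fintype.card n - 2 * Fintype.card m)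
  have e : n ≃ (m ⊕ m) ⊕ p := Fintype.equivOfCardEq <| by
    simp only [p, Fintype.card_sum, Fintype.card_fin]; omega
  let X : Matrix m ((m ⊕ m) ⊕ p) K := fromCols (fromCols 1 1) 0
  let lam : (m ⊕ m) ⊕ p → K := Sum.elim (Sum.elim 1 (-1)) 1
  let Y : Matrix ((m ⊕ m) ⊕ p) m K := fromRows (fromRows 1 0) 0
  have hXY : X * Y = 1 := by simp [X, Y, fromCols_mul_fromRows]
  refine ⟨X.submatrix id e, lam ∘ e, ?_, ?_, ?_⟩
  · exact (rank_submatrix X (Equiv.refl m) e).trans (rank_eq_card_of_mul_eq_one hXY)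
  · have hlam : ∀ j, lam j ≠ 0 := by simp [lam, Sum.forall]
    exact fun i => hlam (e i)
  · rw [submatrix_mul_diagonal_mul_transpose, fromCols_mul_diagonal_mul_transpose,
      fromCols_mul_diagonal_mul_transpose]
    have hneg : diagonal (-1 : m → K) = -1 := by rw [← diagonal_one, diagonal_neg]; rfl
    simp [hneg]

theorem exists_selfProjecting_of_two_mul_le_general {K : Type*} [Field K] {k n : ℕ}
    (hn : 2 * k ≤ n) :
    ∃ (X : Matrix (Fin k) (Fin n) K) (lam : Fin n → K),
      X.rank = k ∧ (∀ i, lam i ≠ 0) ∧ X * Matrix.diagonal lam * X.transpose = 0 := by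
  simpa using exists_selfProjecting_of_two_mul_card_le (K := K) (m := Fin k) (n := Fin n)
    (by simpa using hn)

/-- Over an algebraically closed field `K`, for `k ≥ 1` and `n ≥ 2k` there
exists a `k × n` matrix `X` of rank `k` and `λ ∈ (K^*)^n` with `X · diag(λ) · Xᵀ = 0`;
i.e. the set of self-projecting points of `Gr(k,n)` is nonempty when `n ≥ 2k`. -/
theorem exists_selfProjecting_of_two_mul_le {K : Type*} [Field K] [IsAlgClosed K] {k n : ℕ}
    (hk : 1 ≤ k) (hn : 2 * k ≤ n) :
    ∃ (X : Matrix (Fin k) (Fin n) K) (lam : Fin n → K),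
      X.rank = k ∧ (∀ i, lam i ≠ 0) ∧ X * Matrix.diagonal lam * X.transpose = 0 :=
  exists_selfProjecting_of_two_mul_le_general hn
end

section
/- Let K be a field, let X be a k×(2k) matrix over K of rank k, and let λ ∈ (K^*)^{2k}. Then X·diag(λ)·Xᵀ = 0 if and only if there exists c ∈ K with c²·(λ_1·λ_2·⋯·λ_{2k}) = (−1)^k such that for every k-element subset I ⊆ {1,…,2k}: q_{I^c}(X) = c · ε(I) · (Π_{i∈I} λ_i) · q_I(X), where I^c = {1,…,2k} \ I. (This is the Plücker-coordinate characterization of membership in the orthogonal Grassmannian OGr^λ(k,2k), with the same constant c for all I.) -/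
/-- The maximal minor `q_I(X)`: the determinant of the `k × k` submatrix of `X` on the
columns indexed by the `k`-element subset `I`, taken in increasing order. -/
def qMinor {K : Type*} [Field K] {k n : ℕ} (X : Matrix (Fin k) (Fin n) K)
    (I : Finset (Fin n)) (hI : I.card = k) : K :=
  (X.submatrix id (fun j : Fin k => ((I.orderIsoOfFin hI j : Fin n)))).det

/-- The "shuffle" permutation of `{1,…,2k}` listing the elements of `I` in increasing
order followed by the elements of the complement `Iᶜ` in increasing order.
Its sign is `ε(I)`. -/
def shufflePerm {k : ℕ} (I : Finset (Fin (2 * k))) (hI : I.card = k)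
    (hIc : Iᶜ.card = k) : Equiv.Perm (Fin (2 * k)) :=
  (finCongr (two_mul k)).trans <|
    finSumFinEquiv.symm.trans <|
      (Equiv.sumCongr (I.orderIsoOfFin hI).toEquiv (Iᶜ.orderIsoOfFin hIc).toEquiv).trans <|
        (Equiv.sumCongr (Equiv.refl _)
            (Equiv.subtypeEquivRight fun x => Finset.mem_compl)).trans <|
          Equiv.sumCompl (· ∈ I)

namespace PluckerAux

open Matrix Finset Function

variable {K : Type*} [Field K] {k n : ℕ}

/-- Minor along an arbitrary column selection. -/
def minor (X : Matrix (Fin k) (Fin n) K) (f : Fin k → Fin n) : K :=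
  (X.submatrix id f).det

/-- The increasing enumeration of a `k`-element subset. -/
def sorted (I : Finset (Fin n)) (hI : I.card = k) : Fin k → Fin n :=
  fun j => I.orderIsoOfFin hI j

lemma qMinor_eq (X : Matrix (Fin k) (Fin n) K) (I : Finset (Fin n)) (hI : I.card = k) :
    qMinor X I hI = minor X (sorted I hI) := rfl

lemma sorted_mem (I : Finset (Fin n)) (hI : I.card = k) (m : Fin k) :
    sorted I hI m ∈ I := (I.orderIsoOfFin hI m).2

lemma sorted_injective (I : Finset (Fin n)) (hI : I.card = k) :
    Function.Injective (sorted I hI) := by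
  intro a b hab
  exact (I.orderIsoOfFin hI).injective (Subtype.ext hab)

lemma sorted_congr {I J : Finset (Fin n)} (h : I = J) (hI : I.card = k) (hJ : J.card = k) :
    sorted I hI = sorted J hJ := by subst h; rfl

lemma sum_sorted (I : Finset (Fin n)) (hI : I.card = k) (g : Fin n → K) :
    ∑ m : Fin k, g (sorted I hI m) = ∑ j ∈ I, g j := by
  rw [← Finset.sum_coe_sort I g]
  exact Fintype.sum_equiv (I.orderIsoOfFin hI).toEquiv _ _ (fun m => rfl)

lemma prod_sorted (I : Finset (Fin n)) (hI : I.card = k) (g : Fin n → K) :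
    ∏ m : Fin k, g (sorted I hI m) = ∏ j ∈ I, g j := by
  rw [← Finset.prod_coe_sort I g]
  exact Fintype.prod_equiv (I.orderIsoOfFin hI).toEquiv _ _ (fun m => rfl)

lemma submatrix_mul_left (g : Matrix (Fin k) (Fin k) K) (X : Matrix (Fin k) (Fin n) K)
    (f : Fin k → Fin n) : (g * X).submatrix id f = g * (X.submatrix id f) := by
  ext i j; simp [Matrix.mul_apply]

lemma minor_mul_left (g : Matrix (Fin k) (Fin k) K) (X : Matrix (Fin k) (Fin n) K)
    (f : Fin k → Fin n) : minor (g * X) f = g.det * minor X f := by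
  rw [minor, submatrix_mul_left, Matrix.det_mul]; rfl

lemma minor_mul_diagonal (X : Matrix (Fin k) (Fin n) K) (lam : Fin n → K)
    (f : Fin k → Fin n) :
    minor (X * Matrix.diagonal lam) f = (∏ j, lam (f j)) * minor X f := by
  have : (X * Matrix.diagonal lam).submatrix id f
      = (X.submatrix id f) * Matrix.diagonal (fun j => lam (f j)) := by
    ext i j
    simp [Matrix.mul_apply, Matrix.diagonal, Matrix.mul_apply, Finset.sum_ite_eq]
  rw [minor, this, Matrix.det_mul, Matrix.det_diagonal, mul_comm]; rfl

lemma minor_comp_perm (X : Matrix (Fin k) (Fin n) K) (f : Fin k → Fin n)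
    (τ : Equiv.Perm (Fin k)) :
    minor X (f ∘ τ) = ((Equiv.Perm.sign τ : ℤ) : K) * minor X f := by
  have : X.submatrix id (f ∘ τ) = (X.submatrix id f).submatrix id τ := rfl
  rw [minor, this, Matrix.det_permute']
  push_cast
  rfl

lemma unit_sq (u : ℤˣ) : ((u : ℤ) : K) * ((u : ℤ) : K) = 1 := by
  rcases Int.units_eq_one_or u with h | h <;> simp [h]

lemma unit_ne_zero (u : ℤˣ) : ((u : ℤ) : K) ≠ 0 := by
  rcases Int.units_eq_one_or u with h | h <;> simp [h]

/-- The equivalence `Fin k ⊕ Fin k ≃ Fin (2*k)`. -/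
def eqk (k : ℕ) : Fin k ⊕ Fin k ≃ Fin (2 * k) :=
  finSumFinEquiv.trans (finCongr (two_mul k)).symm

lemma shufflePerm_eqk (I : Finset (Fin (2 * k))) (hI : I.card = k) (hIc : Iᶜ.card = k)
    (z : Fin k ⊕ Fin k) :
    shufflePerm I hI hIc (eqk k z) = Sum.elim (sorted I hI) (sorted Iᶜ hIc) z := by
  have h1 : finCongr (two_mul k) (eqk k z) = finSumFinEquiv z := by simp [eqk]
  have key : ∀ x : Fin (2 * k), shufflePerm I hI hIc x
      = Sum.elim (sorted I hI) (sorted Iᶜ hIc) (finSumFinEquiv.symm (finCongr (two_mul k) x)) := by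
    intro x
    rw [shufflePerm]
    simp only [Equiv.trans_apply]
    rcases h : finSumFinEquiv.symm (finCongr (two_mul k) x) with m | m
    · simp [h, sorted]
    · simp [h, sorted]
  rw [key, h1, Equiv.symm_apply_apply]

lemma prod_swaps_apply (J : List (Fin k)) (hJ : J.Nodup) (j : Fin k) :
    ((J.map (fun a => Equiv.swap (Sum.inl a) (Sum.inr a))).prod (Sum.inl j)
        = if j ∈ J then (Sum.inr j : Fin k ⊕ Fin k) else Sum.inl j)
    ∧ ((J.map (fun a => Equiv.swap (Sum.inl a) (Sum.inr a))).prod (Sum.inr j)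
        = if j ∈ J then (Sum.inl j : Fin k ⊕ Fin k) else Sum.inr j) := by
  induction J with
  | nil => simp
  | cons a J ih =>
      obtain ⟨ha, hnd⟩ := List.nodup_cons.1 hJ
      obtain ⟨ih1, ih2⟩ := ih hnd
      constructor
      · rw [List.map_cons, List.prod_cons, Equiv.Perm.mul_apply, ih1]
        by_cases hmem : j ∈ J
        · have hne : a ≠ j := fun h => ha (h ▸ hmem)
          rw [if_pos hmem, if_pos (List.mem_cons_of_mem a hmem)]
          exact Equiv.swap_apply_of_ne_of_ne (by simp) (by simp [hne.symm])
        · rw [if_neg hmem]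
          by_cases hja : j = a
          · subst hja
            simp [Equiv.swap_apply_left]
          · rw [if_neg (by simp [hja, hmem])]
            exact Equiv.swap_apply_of_ne_of_ne (by simp [hja]) (by simp)
      · rw [List.map_cons, List.prod_cons, Equiv.Perm.mul_apply, ih2]
        by_cases hmem : j ∈ J
        · have hne : a ≠ j := fun h => ha (h ▸ hmem)
          rw [if_pos hmem, if_pos (List.mem_cons_of_mem a hmem)]
          exact Equiv.swap_apply_of_ne_of_ne (by simp [hne.symm]) (by simp)
        · rw [if_neg hmem]
          by_cases hja : j = a
          · subst hja
            simp [Equiv.swap_apply_right]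
          · rw [if_neg (by simp [hja, hmem])]
            exact Equiv.swap_apply_of_ne_of_ne (by simp) (by simp [hja])

lemma sign_sumComm :
    Equiv.Perm.sign (Equiv.sumComm (Fin k) (Fin k)) = (-1) ^ k := by
  classical
  have hnd : (List.finRange k).Nodup := List.nodup_finRange k
  have hprod : ((List.finRange k).map (fun a => Equiv.swap (Sum.inl a) (Sum.inr a))).prod
      = (Equiv.sumComm (Fin k) (Fin k)) := by
    apply Equiv.ext
    intro x
    cases x with
    | inl j => rw [(prod_swaps_apply _ hnd j).1]; simp [List.mem_finRange]
    | inr j => rw [(prod_swaps_apply _ hnd j).2]; simp [List.mem_finRange]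
  have hswaps : ∀ g ∈ (List.finRange k).map (fun a => Equiv.swap (Sum.inl a) (Sum.inr a)),
      g.IsSwap := by
    intro g hg
    obtain ⟨a, -, rfl⟩ := List.mem_map.1 hg
    exact ⟨Sum.inl a, Sum.inr a, by simp, rfl⟩
  rw [← hprod, Equiv.Perm.sign_prod_list_swap hswaps, List.length_map, List.length_finRange]

lemma sign_shuffle_compl (I : Finset (Fin (2 * k))) (hI : I.card = k) (hIc : Iᶜ.card = k)
    (h2 : Iᶜᶜ.card = k) :
    Equiv.Perm.sign (shufflePerm Iᶜ hIc h2)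
      = (-1) ^ k * Equiv.Perm.sign (shufflePerm I hI hIc) := by
  have hcc : Iᶜᶜ = I := compl_compl I
  have hps : shufflePerm Iᶜ hIc h2
      = shufflePerm I hI hIc * ((eqk k).permCongr (Equiv.sumComm (Fin k) (Fin k))) := by
    apply Equiv.ext
    intro x
    obtain ⟨z, rfl⟩ := (eqk k).surjective x
    rw [Equiv.Perm.mul_apply]
    have hpc : (eqk k).permCongr (Equiv.sumComm (Fin k) (Fin k)) (eqk k z)
        = eqk k (Equiv.sumComm (Fin k) (Fin k) z) := by
      simp [Equiv.permCongr_apply]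
    rw [hpc, shufflePerm_eqk, shufflePerm_eqk]
    have hs : sorted Iᶜᶜ h2 = sorted I hI := sorted_congr hcc h2 hI
    cases z <;> simp [hs]
  rw [hps, Equiv.Perm.sign_mul, Equiv.Perm.sign_permCongr, sign_sumComm, mul_comm]

/-- The `k × 2k` matrix whose rows are the standard basis vectors indexed by `I`. -/
def EI (K : Type*) [Field K] (I : Finset (Fin n)) (hI : I.card = k) :
    Matrix (Fin k) (Fin n) K :=
  Matrix.of fun p j => if sorted I hI p = j then 1 else 0

lemma EI_mul_transpose (I : Finset (Fin n)) (hI : I.card = k)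
    (B : Matrix (Fin k) (Fin n) K) :
    EI K I hI * Bᵀ = (B.submatrix id (sorted I hI))ᵀ := by
  ext p q
  simp [EI, Matrix.mul_apply, ite_mul, Finset.sum_ite_eq]

lemma mul_EI_transpose (I : Finset (Fin n)) (hI : I.card = k)
    (A : Matrix (Fin k) (Fin n) K) :
    A * (EI K I hI)ᵀ = A.submatrix id (sorted I hI) := by
  ext p q
  simp [EI, Matrix.mul_apply, mul_ite, eq_comm, Finset.sum_ite_eq]

/-- Determinant of the square matrix formed by stacking the unit rows `E_I` on top of `A`. -/
lemma det_stack_EI (A : Matrix (Fin k) (Fin (2 * k)) K) (I : Finset (Fin (2 * k)))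
    (hI : I.card = k) (hIc : Iᶜ.card = k) :
    ((Matrix.fromRows (EI K I hI) A).submatrix id (eqk k)).det
      = ((Equiv.Perm.sign (shufflePerm I hI hIc) : ℤ) : K) * minor A (sorted Iᶜ hIc) := by
  classical
  set σ := shufflePerm I hI hIc with hσ
  set τ : Equiv.Perm (Fin k ⊕ Fin k) := (eqk k).symm.permCongr σ with hτ
  have hsign : Equiv.Perm.sign τ = Equiv.Perm.sign σ := Equiv.Perm.sign_permCongr _ _
  set N := (Matrix.fromRows (EI K I hI) A).submatrix id (eqk k) with hN
  have hcol : ∀ j, (eqk k) (τ j) = Sum.elim (sorted I hI) (sorted Iᶜ hIc) j := by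
    intro j
    have : (eqk k) (τ j) = σ ((eqk k) j) := by
      simp [hτ, Equiv.permCongr_apply]
    rw [this, hσ, shufflePerm_eqk]
  have hblock : N.submatrix id τ
      = Matrix.fromBlocks 1 0 (A.submatrix id (sorted I hI)) (A.submatrix id (sorted Iᶜ hIc)) := by
    ext i j
    have : (N.submatrix id τ) i j
        = (Matrix.fromRows (EI K I hI) A) i (Sum.elim (sorted I hI) (sorted Iᶜ hIc) j) := by
      simp [hN, hcol j]
    rw [this]
    rcases i with p | p <;> rcases j with m | m
    · by_cases hpm : p = m
      · subst hpm; simp [EI, Matrix.one_apply]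
      · have : sorted I hI p ≠ sorted I hI m := fun h => hpm (sorted_injective I hI h)
        simp [EI, Matrix.one_apply, this, hpm]
    · have : sorted I hI p ≠ sorted Iᶜ hIc m := by
        intro h
        have h1 := sorted_mem I hI p
        have h2 := sorted_mem Iᶜ hIc m
        rw [h] at h1
        exact (Finset.mem_compl.1 h2) h1
      simp [EI, this]
    · simp
    · simp
  have hdet1 : (N.submatrix id τ).det = minor A (sorted Iᶜ hIc) := by
    rw [hblock, Matrix.det_fromBlocks_zero₁₂, Matrix.det_one, one_mul]; rfl
  have hdet2 : (N.submatrix id τ).det = ((Equiv.Perm.sign σ : ℤ) : K) * N.det := by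
    rw [Matrix.det_permute', hsign]
  have hss := unit_sq (K := K) (Equiv.Perm.sign σ)
  calc N.det = (((Equiv.Perm.sign σ : ℤ) : K) * ((Equiv.Perm.sign σ : ℤ) : K)) * N.det := by
        rw [hss, one_mul]
    _ = ((Equiv.Perm.sign σ : ℤ) : K) * ((N.submatrix id τ).det) := by rw [hdet2]; ring
    _ = ((Equiv.Perm.sign σ : ℤ) : K) * minor A (sorted Iᶜ hIc) := by rw [hdet1]

/-- The key determinant identity. -/
lemma star_identity (U A B Z : Matrix (Fin k) (Fin (2 * k)) K) (hAB : A * Bᵀ = 0) :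
    ((Matrix.fromRows U A).submatrix id (eqk k)).det
        * ((Matrix.fromCols Bᵀ Zᵀ).submatrix (eqk k) id).det
      = (U * Bᵀ).det * (A * Zᵀ).det := by
  rw [← Matrix.det_mul, Matrix.submatrix_mul_equiv, Matrix.submatrix_id_id,
    Matrix.fromRows_mul_fromCols, hAB, Matrix.det_fromBlocks_zero₂₁]

/-- The fundamental relation between minors of `B` and complementary minors of `A`
when `A * Bᵀ = 0`. -/
lemma minor_rel (A B : Matrix (Fin k) (Fin (2 * k)) K) (hAB : A * Bᵀ = 0)
    (J : Finset (Fin (2 * k))) (hJ : J.card = k) :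
    ∃ w : K, ∀ (I : Finset (Fin (2 * k))) (hI : I.card = k) (hIc : Iᶜ.card = k),
      ((Equiv.Perm.sign (shufflePerm I hI hIc) : ℤ) : K) * minor A (sorted Iᶜ hIc) * w
        = minor B (sorted I hI) * minor A (sorted J hJ) := by
  refine ⟨((Matrix.fromCols Bᵀ (EI K J hJ)ᵀ).submatrix (eqk k) id).det, fun I hI hIc => ?_⟩
  have h1 := star_identity (EI K I hI) A B (EI K J hJ) hAB
  rw [det_stack_EI A I hI hIc, EI_mul_transpose, mul_EI_transpose, Matrix.det_transpose] at h1
  exact h1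

lemma card_compl_eq {I : Finset (Fin (2 * k))} (hI : I.card = k) : Iᶜ.card = k := by
  simp [Finset.card_compl, hI]; omega

lemma exists_minor_ne_zero (X : Matrix (Fin k) (Fin n) K) (h : X.rank = k) :
    ∃ (I : Finset (Fin n)) (hI : I.card = k), minor X (sorted I hI) ≠ 0 := by
  classical
  rw [Matrix.rank] at h
  rw [Matrix.range_mulVecLin] at h
  change Module.finrank K (Submodule.span K (Set.range Xᵀ)) = k at h
  have hspan : Submodule.span K (Set.range Xᵀ) = ⊤ := by
    apply Submodule.eq_top_of_finrank_eq
    rw [h, Module.finrank_fin_fun]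
  obtain ⟨b, hbsub, hbspan, hbind⟩ := exists_linearIndependent K (Set.range Xᵀ)
  rw [hspan] at hbspan
  have hbfin : b.Finite := (Set.finite_range Xᵀ).subset hbsub
  haveI : Fintype b := hbfin.fintype
  have hcard : b.toFinset.card = k := by
    have hh := finrank_span_set_eq_card hbind
    rw [hbspan, finrank_top, Module.finrank_fin_fun] at hh
    omega
  have hchoice : ∀ x : b.toFinset, ∃ j : Fin n, Xᵀ j = (x : Fin k → K) := by
    intro x
    exact hbsub (Set.mem_toFinset.1 x.2)
  choose f hf using hchoice
  have hfinj : Function.Injective f := by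
    intro x y hxy
    apply Subtype.ext
    rw [← hf x, ← hf y, hxy]
  set I : Finset (Fin n) := b.toFinset.attach.image f with hIdef
  have hI : I.card = k := by
    rw [hIdef, Finset.card_image_of_injective _ hfinj, Finset.card_attach, hcard]
  refine ⟨I, hI, ?_⟩
  set S := X.submatrix id (sorted I hI) with hS
  set col : Fin k → (Fin k → K) := fun m => Xᵀ (sorted I hI m) with hcol
  have hXinjI : ∀ j₁ ∈ I, ∀ j₂ ∈ I, Xᵀ j₁ = Xᵀ j₂ → j₁ = j₂ := by
    intro j₁ h₁ j₂ h₂ he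
    obtain ⟨x₁, -, rfl⟩ := Finset.mem_image.1 h₁
    obtain ⟨x₂, -, rfl⟩ := Finset.mem_image.1 h₂
    rw [hf x₁, hf x₂] at he
    exact congrArg f (Subtype.ext he)
  have hScol : ∀ m, col m ∈ b := by
    intro m
    have hmem : sorted I hI m ∈ I := sorted_mem I hI m
    obtain ⟨x, -, hx⟩ := Finset.mem_image.1 hmem
    have : col m = Xᵀ (f x) := by rw [hx]
    rw [this, hf x]
    exact Set.mem_toFinset.1 x.2
  have hSinj : Function.Injective col := by
    intro m m' hmm
    apply sorted_injective I hI
    exact hXinjI _ (sorted_mem I hI m) _ (sorted_mem I hI m') hmm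
  have hind : LinearIndependent K col := by
    have he : Function.Injective (fun m => (⟨col m, hScol m⟩ : b)) := by
      intro m m' hmm
      exact hSinj (congrArg Subtype.val hmm)
    exact hbind.comp _ he
  have hTS : (fun m => Sᵀ m) = col := by funext m p; rfl
  have hmvinj : Function.Injective S.mulVec := Matrix.mulVec_injective_iff.2 (by change LinearIndependent K (fun m => Sᵀ m); rw [hTS]; exact hind)
  have hmvinj : Function.Injective S.mulVec := Matrix.mulVec_injective_iff.2 hind
  intro hdet
  obtain ⟨v, hv, hv0⟩ := (Matrix.exists_mulVec_eq_zero_iff).2 hdet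
  exact hv (hmvinj (by rw [hv0, Matrix.mulVec_zero]))

/-- Entry extraction: if `Z` restricted to the columns `v` is the identity, the minor
on `v` with the `p`-th column replaced by column `j` is the entry `Z p j`. -/
lemma minor_update (Z : Matrix (Fin k) (Fin n) K) (v : Fin k → Fin n)
    (hZ : Z.submatrix id v = 1) (p : Fin k) (j : Fin n) :
    minor Z (Function.update v p j) = Z p j := by
  have : Z.submatrix id (Function.update v p j)
      = Matrix.updateCol 1 p (fun q => Z q j) := by
    ext q m
    by_cases hm : m = p
    · subst hm; simp [Matrix.updateCol_apply]
    · have : Z q (v m) = (1 : Matrix (Fin k) (Fin k) K) q m := by rw [← hZ]; rfl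
      simp [Matrix.updateCol_apply, hm, Function.update_apply, this]
  rw [minor, this, ← Matrix.cramer_apply, Matrix.cramer_one]
  rfl

/-- Decompose a minor along an injective column selection into a sorted minor and a sign,
uniformly in the matrix. -/
lemma exists_sorted_decomp (f : Fin k → Fin n) (hf : Function.Injective f) :
    ∃ (I : Finset (Fin n)) (hI : I.card = k) (τ : Equiv.Perm (Fin k)),
      ∀ (Y : Matrix (Fin k) (Fin n) K),
        minor Y f = ((Equiv.Perm.sign τ : ℤ) : K) * minor Y (sorted I hI) := by
  classical
  set I : Finset (Fin n) := Finset.univ.image f with hIdef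
  have hI : I.card = k := by
    rw [hIdef, Finset.card_image_of_injective _ hf, Finset.card_univ, Fintype.card_fin]
  have hmem : ∀ j, f j ∈ I := by
    intro j
    rw [hIdef]
    exact Finset.mem_image_of_mem f (Finset.mem_univ j)
  set t : Fin k → Fin k := fun j => (I.orderIsoOfFin hI).symm ⟨f j, hmem j⟩ with ht
  have htinj : Function.Injective t := by
    intro a b hab
    apply hf
    have := congrArg (fun z => ((I.orderIsoOfFin hI z : Fin n))) hab
    simpa [ht] using this
  have htbij : Function.Bijective t := Finite.injective_iff_bijective.1 htinj
  refine ⟨I, hI, Equiv.ofBijective t htbij, fun Y => ?_⟩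
  have hcomp : sorted I hI ∘ (Equiv.ofBijective t htbij) = f := by
    funext j
    simp [sorted, Equiv.ofBijective_apply, ht]
  rw [← hcomp, minor_comp_perm]

lemma orderIso_symm_sorted (I : Finset (Fin n)) (hI : I.card = k) (m : Fin k)
    (h : sorted I hI m ∈ I) :
    (I.orderIsoOfFin hI).symm ⟨sorted I hI m, h⟩ = m := by
  have : (⟨sorted I hI m, h⟩ : {x // x ∈ I}) = I.orderIsoOfFin hI m := Subtype.ext rfl
  rw [this, OrderIso.symm_apply_apply]

lemma sign_shuffle_compl_cast (I : Finset (Fin (2 * k))) (hI : I.card = k)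
    (hIc : Iᶜ.card = k) (h2 : Iᶜᶜ.card = k) :
    ((Equiv.Perm.sign (shufflePerm Iᶜ hIc h2) : ℤ) : K)
      = (-1) ^ k * ((Equiv.Perm.sign (shufflePerm I hI hIc) : ℤ) : K) := by
  rw [sign_shuffle_compl I hI hIc h2]
  push_cast
  ring

section Kernel

variable (A : Matrix (Fin k) (Fin (2 * k)) K) (J : Finset (Fin (2 * k)))
  (hJ : J.card = k) (hJc : Jᶜ.card = k)

/-- A matrix whose rows span the kernel of `A` (viewed via `A * Cᵀ = 0`). -/
noncomputable def Cmat : Matrix (Fin k) (Fin (2 * k)) K :=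
  Matrix.of fun p j =>
    if h : j ∈ J then
      -((A.submatrix id (sorted J hJ))⁻¹ * A.submatrix id (sorted Jᶜ hJc))
          ((J.orderIsoOfFin hJ).symm ⟨j, h⟩) p
    else if (Jᶜ.orderIsoOfFin hJc).symm ⟨j, Finset.mem_compl.2 h⟩ = p then 1 else 0

lemma Cmat_submatrix_v : (Cmat A J hJ hJc).submatrix id (sorted Jᶜ hJc) = 1 := by
  ext p m
  have hmem : sorted Jᶜ hJc m ∈ Jᶜ := sorted_mem _ _ m
  have hnot : ¬ sorted Jᶜ hJc m ∈ J := Finset.mem_compl.1 hmem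
  simp only [Matrix.submatrix_apply, id_eq, Cmat, Matrix.of_apply, dif_neg hnot]
  have : (Jᶜ.orderIsoOfFin hJc).symm ⟨sorted Jᶜ hJc m, hmem⟩ = m :=
    orderIso_symm_sorted Jᶜ hJc m hmem
  rw [this, Matrix.one_apply]
  by_cases hmp : m = p
  · simp [hmp]
  · simp [hmp, Ne.symm hmp]

lemma Cmat_apply_mem (j : Fin (2 * k)) (h : j ∈ J) (p : Fin k) :
    Cmat A J hJ hJc p j
      = -((A.submatrix id (sorted J hJ))⁻¹ * A.submatrix id (sorted Jᶜ hJc))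
          ((J.orderIsoOfFin hJ).symm ⟨j, h⟩) p := by
  simp [Cmat, dif_pos h]

lemma A_mul_Cmat_transpose (hG : IsUnit (A.submatrix id (sorted J hJ)).det) :
    A * (Cmat A J hJ hJc)ᵀ = 0 := by
  classical
  set G := A.submatrix id (sorted J hJ) with hGdef
  set H := A.submatrix id (sorted Jᶜ hJc) with hHdef
  ext r s
  have hentry : (A * (Cmat A J hJ hJc)ᵀ) r s = ∑ j, A r j * Cmat A J hJ hJc s j := by
    simp [Matrix.mul_apply, Matrix.transpose_apply]
  rw [hentry, ← Finset.sum_add_sum_compl J]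
  have hJsum : ∑ j ∈ J, A r j * Cmat A J hJ hJc s j = -(G * (G⁻¹ * H)) r s := by
    rw [← sum_sorted J hJ]
    have hterm : ∀ m : Fin k, A r (sorted J hJ m) * Cmat A J hJ hJc s (sorted J hJ m)
        = -(G r m * (G⁻¹ * H) m s) := by
      intro m
      rw [Cmat_apply_mem A J hJ hJc (sorted J hJ m) (sorted_mem J hJ m) s]
      have : (J.orderIsoOfFin hJ).symm ⟨sorted J hJ m, sorted_mem J hJ m⟩ = m :=
        orderIso_symm_sorted J hJ m (sorted_mem J hJ m)
      rw [this]
      have : A r (sorted J hJ m) = G r m := rfl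
      rw [this]
      ring
    rw [Finset.sum_congr rfl (fun m _ => hterm m)]
    simp [Matrix.mul_apply, Finset.sum_neg_distrib]
  have hJcsum : ∑ j ∈ Jᶜ, A r j * Cmat A J hJ hJc s j = H r s := by
    rw [← sum_sorted Jᶜ hJc]
    have hterm : ∀ m : Fin k, A r (sorted Jᶜ hJc m) * Cmat A J hJ hJc s (sorted Jᶜ hJc m)
        = A r (sorted Jᶜ hJc m) * (if m = s then 1 else 0) := by
      intro m
      congr 1
      have h1 : Cmat A J hJ hJc s (sorted Jᶜ hJc m)
          = ((Cmat A J hJ hJc).submatrix id (sorted Jᶜ hJc)) s m := rfl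
      rw [h1, Cmat_submatrix_v, Matrix.one_apply]
      by_cases hms : m = s
      · simp [hms]
      · simp [hms, Ne.symm hms]
    rw [Finset.sum_congr rfl (fun m _ => hterm m)]
    simp [mul_ite, Finset.sum_ite_eq]
    rfl
  rw [hJsum, hJcsum, Matrix.mul_nonsing_inv_cancel_left G H hG]
  simp

end Kernel

end PluckerAux

open PluckerAux Matrix Finset

/-- For a rank-`k` matrix `X` of size `k × 2k` over a field `K` and
`λ ∈ (K^*)^{2k}`, `X · diag(λ) · Xᵀ = 0` holds iff there is a constant `c ∈ K` with
`c² · λ_1⋯λ_{2k} = (-1)^k` such that `q_{Iᶜ}(X) = c · ε(I) · (Π_{i∈I} λ_i) · q_I(X)`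
for every `k`-element subset `I ⊆ {1,…,2k}` (with the same `c` for all `I`). -/
theorem selfProjecting_iff_plucker {K : Type*} [Field K] {k : ℕ}
    (X : Matrix (Fin k) (Fin (2 * k)) K) (hrank : X.rank = k)
    (lam : Fin (2 * k) → K) (hlam : ∀ i, lam i ≠ 0) :
    X * Matrix.diagonal lam * X.transpose = 0 ↔
      ∃ c : K, c ^ 2 * ∏ i, lam i = (-1) ^ k ∧
        ∀ (I : Finset (Fin (2 * k))) (hI : I.card = k) (hIc : Iᶜ.card = k),
          qMinor X Iᶜ hIc =
            c * ((Equiv.Perm.sign (shufflePerm I hI hIc) : ℤ) : K) *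
              (∏ i ∈ I, lam i) * qMinor X I hI := by
  classical
  set D := Matrix.diagonal lam with hD
  set A := X * D with hA
  have hDdet : IsUnit D.det := by
    rw [hD, Matrix.det_diagonal]
    exact (Finset.prod_ne_zero_iff.2 (fun i _ => hlam i)).isUnit
  have hArank : A.rank = k := by
    rw [hA, Matrix.rank_mul_eq_left_of_isUnit_det D X hDdet, hrank]
  have hmA : ∀ (I : Finset (Fin (2 * k))) (hI : I.card = k),
      minor A (sorted I hI) = (∏ i ∈ I, lam i) * minor X (sorted I hI) := by
    intro I hI
    rw [hA, hD, minor_mul_diagonal, prod_sorted]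
  constructor
  · -- forward direction
    intro h0
    have hAX : A * Xᵀ = 0 := h0
    obtain ⟨J, hJ, hGne⟩ := exists_minor_ne_zero A hArank
    obtain ⟨w, hw⟩ := minor_rel A X hAX J hJ
    set g : K := minor A (sorted J hJ) with hg
    have hginv : g * g⁻¹ = 1 := mul_inv_cancel₀ hGne
    set c : K := (-1) ^ k * w * g⁻¹ with hc
    have hrel : ∀ (I : Finset (Fin (2 * k))) (hI : I.card = k) (hIc : Iᶜ.card = k),
        minor X (sorted Iᶜ hIc)
          = c * ((Equiv.Perm.sign (shufflePerm I hI hIc) : ℤ) : K)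
              * (∏ i ∈ I, lam i) * minor X (sorted I hI) := by
      intro I hI hIc
      have h2 : Iᶜᶜ.card = k := by rw [compl_compl]; exact hI
      have hw2 := hw Iᶜ hIc h2
      rw [sorted_congr (compl_compl I) h2 hI, sign_shuffle_compl_cast I hI hIc h2,
        hmA I hI] at hw2
      rw [hc]
      linear_combination (-(g⁻¹)) * hw2 + (-(minor X (sorted Iᶜ hIc))) * hginv
    refine ⟨c, ?_, fun I hI hIc => hrel I hI hIc⟩
    -- the c² condition
    obtain ⟨I₁, hI₁, hne1⟩ := exists_minor_ne_zero X hrank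
    have hIc₁ : I₁ᶜ.card = k := card_compl_eq hI₁
    have h2 : I₁ᶜᶜ.card = k := by rw [compl_compl]; exact hI₁
    have e1 := hrel I₁ hI₁ hIc₁
    have e2 := hrel I₁ᶜ hIc₁ h2
    rw [sorted_congr (compl_compl I₁) h2 hI₁, sign_shuffle_compl_cast I₁ hI₁ hIc₁ h2,
      e1] at e2
    have hsq := unit_sq (K := K) (Equiv.Perm.sign (shufflePerm I₁ hI₁ hIc₁))
    have hprod : (∏ i ∈ I₁, lam i) * (∏ i ∈ I₁ᶜ, lam i) = ∏ i, lam i :=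
      Finset.prod_mul_prod_compl I₁ lam
    have hm1 : ((-1 : K)) ^ k * (-1) ^ k = 1 := by
      rw [← pow_add, ← two_mul, pow_mul]
      norm_num
    set ε : K := ((Equiv.Perm.sign (shufflePerm I₁ hI₁ hIc₁) : ℤ) : K) with hε
    set m : K := minor X (sorted I₁ hI₁) with hm
    set P : K := ∏ i ∈ I₁, lam i with hP
    set P' : K := ∏ i ∈ I₁ᶜ, lam i with hP'
    -- e2 : m = c * ((-1)^k * ε) * P' * (c * ε * P * m)
    have h3 : m * (c ^ 2 * (∏ i, lam i) * (-1) ^ k) = m * 1 := by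
      linear_combination (-(1 : K)) * e2
        - (c ^ 2 * (-1) ^ k * m * P * P') * hsq - (c ^ 2 * (-1) ^ k * m) * hprod
    have h4 : c ^ 2 * (∏ i, lam i) * (-1) ^ k = 1 := mul_left_cancel₀ hne1 h3
    linear_combination ((-1 : K) ^ k) * h4 - (c ^ 2 * (∏ i, lam i)) * hm1
  · -- backward direction
    rintro ⟨c, hc2, hrel⟩
    have hm1 : ((-1 : K)) ^ k ≠ 0 := pow_ne_zero k (neg_ne_zero.2 one_ne_zero)
    have hcne : c ≠ 0 := by
      intro h0
      rw [h0] at hc2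
      simp at hc2
      exact hm1 hc2.symm
    obtain ⟨J, hJ, hGne⟩ := exists_minor_ne_zero A hArank
    have hJc : Jᶜ.card = k := card_compl_eq hJ
    have hGu : IsUnit (A.submatrix id (sorted J hJ)).det := Ne.isUnit hGne
    set C := Cmat A J hJ hJc with hC
    have hACt : A * Cᵀ = 0 := A_mul_Cmat_transpose A J hJ hJc hGu
    obtain ⟨wc, hwc⟩ := minor_rel A C hACt J hJ
    have hCv : C.submatrix id (sorted Jᶜ hJc) = 1 := Cmat_submatrix_v A J hJ hJc
    have hCminor1 : minor C (sorted Jᶜ hJc) = 1 := by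
      rw [minor, hCv, Matrix.det_one]
    have h2J : Jᶜᶜ.card = k := by rw [compl_compl]; exact hJ
    have hwJ := hwc Jᶜ hJc h2J
    rw [sorted_congr (compl_compl J) h2J hJ, hCminor1, one_mul] at hwJ
    have hwcne : wc ≠ 0 := by
      intro h0
      rw [h0, mul_zero] at hwJ
      exact hGne hwJ.symm
    have hwinv : wc * wc⁻¹ = 1 := mul_inv_cancel₀ hwcne
    -- relations for X in terms of A
    have hXA : ∀ (I : Finset (Fin (2 * k))) (hI : I.card = k) (hIc : Iᶜ.card = k),
        minor X (sorted I hI)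
          = c * (-1) ^ k * ((Equiv.Perm.sign (shufflePerm I hI hIc) : ℤ) : K)
              * minor A (sorted Iᶜ hIc) := by
      intro I hI hIc
      have h2 : Iᶜᶜ.card = k := by rw [compl_compl]; exact hI
      have e := hrel Iᶜ hIc h2
      rw [qMinor_eq, qMinor_eq, sorted_congr (compl_compl I) h2 hI,
        sign_shuffle_compl_cast I hI hIc h2] at e
      linear_combination e
        - (c * (-1) ^ k * ((Equiv.Perm.sign (shufflePerm I hI hIc) : ℤ) : K)) * (hmA Iᶜ hIc)
    set t : K := c * (-1) ^ k * minor A (sorted J hJ) * wc⁻¹ with ht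
    have htne : t ≠ 0 := by
      rw [ht]
      exact mul_ne_zero (mul_ne_zero (mul_ne_zero hcne hm1) hGne) (inv_ne_zero hwcne)
    have hXC : ∀ (I : Finset (Fin (2 * k))) (hI : I.card = k) (hIc : Iᶜ.card = k),
        minor X (sorted I hI) = t * minor C (sorted I hI) := by
      intro I hI hIc
      rw [ht]
      linear_combination (hXA I hI hIc)
        + (c * (-1) ^ k * wc⁻¹) * (hwc I hI hIc)
        - (c * (-1) ^ k * ((Equiv.Perm.sign (shufflePerm I hI hIc) : ℤ) : K)
            * minor A (sorted Iᶜ hIc)) * hwinv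
    have hXCf : ∀ f : Fin k → Fin (2 * k), Function.Injective f →
        minor X f = t * minor C f := by
      intro f hfinj
      obtain ⟨I, hI, τ, hdec⟩ := exists_sorted_decomp (K := K) f hfinj
      rw [hdec X, hdec C, hXC I hI (card_compl_eq hI)]
      ring
    set Xv := X.submatrix id (sorted Jᶜ hJc) with hXv
    have hXvdet : Xv.det = t := by
      have := hXCf (sorted Jᶜ hJc) (sorted_injective Jᶜ hJc)
      rw [hCminor1, mul_one] at this
      exact this
    have hXvu : IsUnit Xv.det := by rw [hXvdet]; exact Ne.isUnit htne
    set Z := Xv⁻¹ * X with hZ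
    have hZv : Z.submatrix id (sorted Jᶜ hJc) = 1 := by
      rw [hZ, submatrix_mul_left, ← hXv, Matrix.nonsing_inv_mul Xv hXvu]
    have hZC : Z = C := by
      ext p j
      by_cases hj : j ∈ Jᶜ
      · set m' := (Jᶜ.orderIsoOfFin hJc).symm ⟨j, hj⟩ with hm'
        have hjv : sorted Jᶜ hJc m' = j :=
          congrArg Subtype.val ((Jᶜ.orderIsoOfFin hJc).apply_symm_apply ⟨j, hj⟩)
        have e1 : Z p (sorted Jᶜ hJc m') = (1 : Matrix (Fin k) (Fin k) K) p m' := by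
          rw [← hZv]; rfl
        have e2 : C p (sorted Jᶜ hJc m') = (1 : Matrix (Fin k) (Fin k) K) p m' := by
          rw [← hCv]; rfl
        rw [← hjv, e1, ← e2]
      · have hjr : ∀ m, sorted Jᶜ hJc m ≠ j := by
          intro m h
          exact hj (h ▸ sorted_mem Jᶜ hJc m)
        have hupd : Function.Injective (Function.update (sorted Jᶜ hJc) p j) := by
          intro a b hab
          by_cases ha : a = p <;> by_cases hb : b = p
          · rw [ha, hb]
          · rw [ha] at hab ⊢
            rw [Function.update_self, Function.update_of_ne hb] at hab
            exact absurd hab.symm (hjr b)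
          · rw [hb] at hab ⊢
            rw [Function.update_of_ne ha, Function.update_self] at hab
            exact absurd hab (hjr a)
          · rw [Function.update_of_ne ha, Function.update_of_ne hb] at hab
            exact sorted_injective Jᶜ hJc hab
        have e1 : minor Z (Function.update (sorted Jᶜ hJc) p j) = Z p j :=
          minor_update Z (sorted Jᶜ hJc) hZv p j
        have e2 : minor C (Function.update (sorted Jᶜ hJc) p j) = C p j :=
          minor_update C (sorted Jᶜ hJc) hCv p j
        have e3 := hXCf (Function.update (sorted Jᶜ hJc) p j) hupd
        have e4 : minor Z (Function.update (sorted Jᶜ hJc) p j)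
            = Xv⁻¹.det * minor X (Function.update (sorted Jᶜ hJc) p j) := by
          rw [hZ]; exact minor_mul_left _ _ _
        have e5 : Xv⁻¹.det * Xv.det = 1 := Matrix.det_nonsing_inv_mul_det Xv hXvu
        rw [hXvdet] at e5
        rw [← e1, ← e2, e4, e3]
        linear_combination (minor C (Function.update (sorted Jᶜ hJc) p j)) * e5
    have hXeq : X = Xv * C := by
      rw [← hZC, hZ]
      exact (Matrix.mul_nonsing_inv_cancel_left Xv X hXvu).symm
    show A * Xᵀ = 0
    calc A * Xᵀ = A * (Xv * C)ᵀ := by rw [← hXeq]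
      _ = A * (Cᵀ * Xvᵀ) := by rw [Matrix.transpose_mul]
      _ = (A * Cᵀ) * Xvᵀ := (Matrix.mul_assoc A Cᵀ Xvᵀ).symm
      _ = 0 := by rw [hACt, Matrix.zero_mul]
end

section
/- Let K be a field, X a k×n matrix over K of rank k, and λ ∈ (K^*)^n such that X·diag(λ)·Xᵀ = 0. Let M be the column matroid of X, i.e. the matroid on the ground set {1,…,n} whose independent sets are exactly the subsets I such that the columns of X indexed by I are linearly independent. Then M has no half-coloop (that is, M is a self-projecting matroid). -/
/-- An element `e` of the ground set of a matroid `M` of rank `k` is a *half-coloop* if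
there exist (not necessarily distinct) flats `F₁, F₂` of `M`, each of rank `k - 1`,
with `F₁ ∪ F₂ = M.E \ {e}`. -/
def Matroid.IsHalfColoop {α : Type*} (M : Matroid α) (k : ℕ) (e : α) : Prop :=
  ∃ F₁ F₂ : Set α, M.IsFlat F₁ ∧ M.IsFlat F₂ ∧
    (∃ I : Set α, M.IsBasis I F₁ ∧ I.ncard = k - 1) ∧
    (∃ I : Set α, M.IsBasis I F₂ ∧ I.ncard = k - 1) ∧
    F₁ ∪ F₂ = M.E \ {e}

/-!
If `e ∉ F` for a flat `F` of a represented matroid, some linear form vanishes on the columns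
of `F` but not on the column of `e`. For a half-coloop `e` with flats `F₁, F₂`, take such forms
`φ₁, φ₂`; then `∑ⱼ λⱼ φ₁(xⱼ) φ₂(xⱼ) = φ₁ · X diag(λ) Xᵀ · φ₂ = 0`, but since every `j ≠ e`
lies in `F₁ ∪ F₂` only the term `λₑ φ₁(xₑ) φ₂(xₑ) ≠ 0` survives.
-/

open Set Matrix Module

theorem Matrix.dotProduct_mul_diagonal_mul_transpose_mulVec {m n R : Type*} [Fintype m]
    [Fintype n] [DecidableEq n] [CommSemiring R] (X : Matrix m n R) (d : n → R) (a b : m → R) :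
    a ⬝ᵥ (X * diagonal d * Xᵀ) *ᵥ b = ∑ j, d j * (a ᵥ* X) j * (b ᵥ* X) j := by
  rw [dotProduct_mulVec, ← vecMul_vecMul, ← dotProduct_mulVec, mulVec_transpose, ← vecMul_vecMul]
  simp only [dotProduct, vecMul_diagonal]
  exact Finset.sum_congr rfl fun j _ => by ring

namespace Matroid

variable {ι K V : Type*} [Field K] [AddCommGroup V] [Module K V] {M : Matroid ι} {v : ι → V}

lemma Indep.mem_closure_iff_mem_span (hE : M.E = univ)
    (hindep : ∀ I, M.Indep I ↔ LinearIndepOn K v I) {I : Set ι} (hI : M.Indep I) {j : ι} :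
    j ∈ M.closure I ↔ v j ∈ Submodule.span K (v '' I) := by
  by_cases hjI : j ∈ I
  · exact iff_of_true (M.subset_closure I hI.subset_ground hjI)
      (Submodule.subset_span (mem_image_of_mem v hjI))
  have key := (hI.insert_indep_iff_of_notMem hjI).symm.trans
    ((hindep _).trans (linearIndepOn_insert hjI))
  rw [hE, mem_sdiff, and_iff_right (mem_univ j), and_iff_right ((hindep I).1 hI)] at key
  exact not_iff_not.1 key

lemma IsFlat.exists_dual_eq_zero_of_notMem (hE : M.E = univ)
    (hindep : ∀ I, M.Indep I ↔ LinearIndepOn K v I) {F : Set ι} (hF : M.IsFlat F) {e : ι}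
    (he : e ∉ F) : ∃ φ : Dual K V, (∀ j ∈ F, φ (v j) = 0) ∧ φ (v e) ≠ 0 := by
  obtain ⟨I, hI⟩ := M.exists_isBasis F (hE ▸ subset_univ F)
  have hcl : ∀ j, j ∈ F ↔ v j ∈ Submodule.span K (v '' I) := fun j => by
    rw [← hI.indep.mem_closure_iff_mem_span hE hindep, hI.closure_eq_closure, hF.closure]
  obtain ⟨φ, hφe, hφ⟩ := Submodule.exists_dual_map_eq_bot_of_notMem ((hcl e).not.1 he)
    inferInstance
  refine ⟨φ, fun j hj => ?_, hφe⟩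
  exact LinearMap.le_ker_iff_map.2 hφ ((hcl j).1 hj)

end Matroid

theorem column_matroid_of_selfProjecting_no_halfColoop_general {K : Type*} [Field K] {k n : ℕ}
    (X : Matrix (Fin k) (Fin n) K)
    (lam : Fin n → K) (hlam : ∀ i, lam i ≠ 0)
    (hsp : X * Matrix.diagonal lam * X.transpose = 0)
    (M : Matroid (Fin n)) (hE : M.E = Set.univ)
    (hindep : ∀ I : Set (Fin n),
      M.Indep I ↔ LinearIndependent K (fun j : I => fun i : Fin k => X i (j : Fin n))) :
    ¬ ∃ e : Fin n, M.IsHalfColoop k e := by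
  rintro ⟨e, F₁, F₂, hF₁, hF₂, -, -, hunion⟩
  have he : e ∉ F₁ ∪ F₂ := by simp [hunion]
  obtain ⟨φ₁, hφ₁F, hφ₁e⟩ := hF₁.exists_dual_eq_zero_of_notMem (v := fun j i => X i j) hE hindep
    fun h => he (.inl h)
  obtain ⟨φ₂, hφ₂F, hφ₂e⟩ := hF₂.exists_dual_eq_zero_of_notMem (v := fun j i => X i j) hE hindep
    fun h => he (.inr h)
  obtain ⟨a₁, rfl⟩ := (dotProductEquiv K (Fin k)).surjective φ₁
  obtain ⟨a₂, rfl⟩ := (dotProductEquiv K (Fin k)).surjective φ₂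
  have hcol (a : Fin k → K) (j : Fin n) :
      dotProductEquiv K (Fin k) a (fun i => X i j) = (a ᵥ* X) j := rfl
  simp only [hcol] at hφ₁F hφ₁e hφ₂F hφ₂e
  have hsum := dotProduct_mul_diagonal_mul_transpose_mulVec X lam a₁ a₂
  rw [hsp, zero_mulVec, dotProduct_zero, Finset.sum_eq_single e] at hsum
  · exact mul_ne_zero (mul_ne_zero (hlam e) hφ₁e) hφ₂e hsum.symm
  · intro j _ hje
    have hj : j ∈ F₁ ∪ F₂ := by simp [hunion, hE, hje]
    rcases hj with hj | hj
    · simp [hφ₁F j hj]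
    · simp [hφ₂F j hj]
  · simp

/-- If `X` is a `k × n` matrix of rank `k` over a field `K` that is
self-projecting with respect to some `λ ∈ (K^*)^n`, then the column matroid of `X`
(the matroid on `{1,…,n}` whose independent sets are the sets of linearly independent
columns of `X`) has no half-coloop, i.e. it is a self-projecting matroid. -/
theorem column_matroid_of_selfProjecting_no_halfColoop {K : Type*} [Field K] {k n : ℕ}
    (X : Matrix (Fin k) (Fin n) K) (hrank : X.rank = k)
    (lam : Fin n → K) (hlam : ∀ i, lam i ≠ 0)
    (hsp : X * Matrix.diagonal lam * X.transpose = 0)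
    (M : Matroid (Fin n)) (hE : M.E = Set.univ)
    (hindep : ∀ I : Set (Fin n),
      M.Indep I ↔ LinearIndependent K (fun j : I => fun i : Fin k => X i (j : Fin n))) :
    ¬ ∃ e : Fin n, M.IsHalfColoop k e :=
  column_matroid_of_selfProjecting_no_halfColoop_general X lam hlam hsp M hE hindep
end

section
/- Let M be a matroid of rank k on a finite ground set E with |E| = 2k. The following are equivalent: (i) M is identically self-dual, i.e. M equals its dual matroid M*; (ii) M has the disjoint basis property, i.e. for every basis B of M there exists a basis C of M with B ∩ C = ∅; (iii) M has no half-coloop. -/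
open Set

namespace Matroid

variable {α : Type*} {M : Matroid α} {k : ℕ} {B C D I J S X : Set α} {e : α}

theorem eq_dual_iff_forall_isBase_compl :
    M = M✶ ↔ ∀ B, M.IsBase B → M.IsBase (M.E \ B) := by
  refine ⟨fun h B hB ↦ IsBase.compl_isBase_of_dual (h ▸ hB), fun h ↦ ?_⟩
  refine ext_isBase rfl fun B hBE ↦ ?_
  rw [dual_isBase_iff hBE]
  exact ⟨h B, fun hB ↦ by simpa [sdiff_sdiff_cancel_left hBE] using h _ hB⟩

theorem IsBase.compl_isBase_of_disjoint [M.Finite] (hC : M.IsBase C)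
    (hBC : Disjoint B C) (hcard : (M.E \ B).ncard ≤ C.ncard) : M.IsBase (M.E \ B) := by
  have hCB : C ⊆ M.E \ B := subset_sdiff.mpr ⟨hC.subset_ground, hBC.symm⟩
  rwa [← eq_of_subset_of_ncard_le hCB hcard (M.ground_finite.subset sdiff_subset)]

theorem Indep.ncard_le_of_isBasis [M.RankFinite] (hI : M.Indep I) (hIX : I ⊆ X)
    (hJ : M.IsBasis J X) : I.ncard ≤ J.ncard := by
  obtain ⟨J', hJ', hIJ'⟩ := hI.subset_isBasis_of_subset hIX
  rw [ncard_def J, ← hJ'.encard_eq_encard hJ, ← ncard_def]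
  exact ncard_le_ncard hIJ' hJ'.indep.finite

theorem Indep.isBase_of_ncard_le [M.RankFinite] (hI : M.Indep I) (hB : M.IsBase B)
    (hcard : B.ncard ≤ I.ncard) : M.IsBase I := by
  obtain ⟨B', hB', hIB'⟩ := hI.exists_isBase_superset
  rwa [eq_of_subset_of_ncard_le hIB' (by rwa [hB'.ncard_eq_ncard_of_isBase hB]) hB'.finite]

theorem not_isHalfColoop_of_eq_dual [M.RankFinite] (hM : M = M✶)
    (hrk : ∀ B, M.IsBase B → B.ncard = k) (he : e ∈ M.E) : ¬ M.IsHalfColoop k e := by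
  rintro ⟨F₁, F₂, hF₁, hF₂, ⟨I, hI, hIk⟩, -, hU⟩
  have heF : e ∉ F₁ ∪ F₂ := by simp [hU]
  have hclI : M.closure I = F₁ := by rw [hI.closure_eq_closure, hF₁.closure]
  have heI : e ∉ I := fun h ↦ heF (.inl (hI.subset h))
  have hindep : M.Indep (insert e I) :=
    (hI.indep.insert_indep_iff_of_notMem heI).mpr ⟨he, hclI ▸ fun h ↦ heF (.inl h)⟩
  have hcard : (insert e I).ncard = k - 1 + 1 := by
    rw [ncard_insert_of_notMem heI hI.indep.finite, hIk]
  obtain ⟨B, hB⟩ := M.exists_isBase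
  have hle := hindep.ncard_le_of_isBasis hindep.subset_ground hB.isBasis_ground
  rw [hcard, hrk B hB] at hle
  have hbase : M.IsBase (insert e I) :=
    hindep.isBase_of_ncard_le hB (by rw [hcard, hrk B hB]; omega)
  have hcirc : M.IsCircuit (M.E \ F₁) := by
    have hcocirc : M✶.IsCircuit (M.E \ F₁) := by
      simpa [insert_sdiff_self_of_notMem heI, hclI] using
        hbase.compl_closure_sdiff_singleton_isCocircuit (mem_insert e I)
    rwa [← hM] at hcocirc
  have hsub : (M.E \ F₁) \ {e} ⊆ F₂ := fun x ⟨⟨hxE, hxF₁⟩, hxe⟩ ↦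
    (show x ∈ F₁ ∪ F₂ from hU ▸ ⟨hxE, hxe⟩).resolve_left hxF₁
  have hecl := hcirc.mem_closure_sdiff_singleton_of_mem ⟨he, fun h ↦ heF (.inl h)⟩
  exact heF (.inr (hF₂.closure ▸ M.closure_subset_closure hsub hecl))

theorem Dep.exists_indep_ncard_eq_subset_closure [M.RankFinite]
    (hrk : ∀ B, M.IsBase B → B.ncard = k) (hD : M.Dep D) (hDfin : D.Finite) (hDk : D.ncard ≤ k) :
    ∃ S, M.Indep S ∧ S.ncard = k - 1 ∧ D ⊆ M.closure S := by
  obtain ⟨J, hJ⟩ := M.exists_isBasis D hD.subset_ground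
  have hJD : J ⊂ D := hJ.subset.ssubset_of_ne fun h ↦ hD.not_indep (h ▸ hJ.indep)
  have hJk : J.ncard < k := (ncard_lt_ncard hJD hDfin).trans_le hDk
  obtain ⟨B, hB, hJB⟩ := hJ.indep.exists_isBase_superset
  obtain ⟨S, hJS, hSB, hSk⟩ :=
    exists_subsuperset_card_eq hJB (n := k - 1) (by omega) (by rw [hrk B hB]; omega)
  exact ⟨S, hB.indep.subset hSB, hSk, hJ.subset_closure.trans (M.closure_subset_closure hJS)⟩

theorem IsBase.isHalfColoop (hrk : ∀ B, M.IsBase B → B.ncard = k) (hB : M.IsBase B)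
    (heB : e ∈ B) (hS : M.Indep S) (hSk : S.ncard = k - 1) (hBS : M.E \ B ⊆ M.closure S)
    (heS : e ∉ M.closure S) : M.IsHalfColoop k e := by
  have hBe : M.IsBasis (B \ {e}) (M.closure (B \ {e})) :=
    (hB.indep.subset sdiff_subset).isBasis_closure
  refine ⟨_, _, M.isFlat_closure _, M.isFlat_closure S,
    ⟨_, hBe, by rw [ncard_sdiff_singleton_of_mem heB, hrk B hB]⟩, ⟨S, hS.isBasis_closure, hSk⟩,
    subset_antisymm (union_subset ?_ ?_) fun x ⟨hxE, hxe⟩ ↦ ?_⟩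
  · exact subset_sdiff_singleton (M.closure_subset_ground _)
      (hB.indep.notMem_closure_sdiff_of_mem heB)
  · exact subset_sdiff_singleton (M.closure_subset_ground S) heS
  · by_cases hxB : x ∈ B
    · exact .inl (hBe.subset ⟨hxB, hxe⟩)
    · exact .inr (hBS ⟨hxE, hxB⟩)

theorem exists_isHalfColoop_of_not_isBase_compl [M.Finite]
    (hrk : ∀ B, M.IsBase B → B.ncard = k) (hB : M.IsBase B) (hcompl : (M.E \ B).ncard = k)
    (hBc : ¬ M.IsBase (M.E \ B)) : ∃ e ∈ M.E, M.IsHalfColoop k e := by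
  have hDfin : (M.E \ B).Finite := M.ground_finite.subset sdiff_subset
  have hdep : M.Dep (M.E \ B) :=
    (not_indep_iff sdiff_subset).mp fun h ↦ hBc (h.isBase_of_ncard_le hB (by rw [hrk B hB, hcompl]))
  have hk : 0 < k := hcompl ▸ (ncard_pos hDfin).mpr hdep.nonempty
  obtain ⟨S, hS, hSk, hBS⟩ := hdep.exists_indep_ncard_eq_subset_closure hrk hDfin hcompl.le
  have hSB : S.encard < B.encard := by
    rw [← hS.finite.cast_ncard_eq, ← hB.finite.cast_ncard_eq, hSk, hrk B hB]
    exact_mod_cast Nat.sub_one_lt_of_lt hk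
  obtain ⟨e, ⟨heB, heS⟩, hins⟩ := hS.exists_insert_of_encard_lt hB.indep hSB
  have heS' : e ∉ M.closure S := ((hS.insert_indep_iff_of_notMem heS).mp hins).2
  exact ⟨e, hB.subset_ground heB, hB.isHalfColoop hrk heB hS hSk hBS heS'⟩

end Matroid

open Matroid in
/-- For a matroid `M` of rank `k` on a finite ground set of size `2k`,
the following are equivalent: (i) `M` is identically self-dual (`M = M✶`);
(ii) `M` has the disjoint basis property; (iii) `M` has no half-coloop. -/
theorem selfDual_tfae {α : Type*} (M : Matroid α) (k : ℕ)
    (hfin : M.E.Finite) (hcard : M.E.ncard = 2 * k)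
    (hrk : ∀ B : Set α, M.IsBase B → B.ncard = k) :
    List.TFAE [
      M = M✶,
      ∀ B : Set α, M.IsBase B → ∃ C : Set α, M.IsBase C ∧ B ∩ C = ∅,
      ¬ ∃ e ∈ M.E, M.IsHalfColoop k e] := by
  have : M.Finite := ⟨hfin⟩
  have hcompl : ∀ B, M.IsBase B → (M.E \ B).ncard = k := fun B hB ↦ by
    rw [Set.ncard_sdiff hB.subset_ground (hfin.subset hB.subset_ground), hcard, hrk B hB]
    omega
  tfae_have 1 → 2 := fun h B hB ↦
    ⟨M.E \ B, eq_dual_iff_forall_isBase_compl.mp h B hB, Set.inter_sdiff_self B M.E⟩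
  tfae_have 2 → 1 := fun h ↦ eq_dual_iff_forall_isBase_compl.mpr fun B hB ↦ by
    obtain ⟨C, hC, hBC⟩ := h B hB
    exact hC.compl_isBase_of_disjoint (Set.disjoint_iff_inter_eq_empty.mpr hBC)
      (by rw [hcompl B hB, hrk C hC])
  tfae_have 1 → 3 := fun h ⟨e, he, hcol⟩ ↦ not_isHalfColoop_of_eq_dual h hrk he hcol
  tfae_have 3 → 1 := fun h ↦ eq_dual_iff_forall_isBase_compl.mpr fun B hB ↦
    by_contra fun hBc ↦ h (exists_isHalfColoop_of_not_isBase_compl hrk hB (hcompl B hB) hBc)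
  tfae_finish
end

section
/- Let M be a matroid of rank k on a finite ground set E. If M has no half-coloop, then M has the disjoint basis property: for every basis B of M there exists a basis C of M with B ∩ C = ∅. -/
namespace Matroid

variable {α : Type*} {M : Matroid α} {B B' I : Set α} {e : α} {k : ℕ}

lemma Indep.closure_sdiff_singleton_subset (hI : M.Indep I) (he : e ∈ I) :
    M.closure (I \ {e}) ⊆ M.E \ {e} := by
  intro x hx
  refine ⟨M.closure_subset_ground _ hx, ?_⟩
  rintro rfl
  exact hI.notMem_closure_sdiff_of_mem he hx

lemma IsBase.exists_isBasis_closure_sdiff_singleton (hrk : ∀ B, M.IsBase B → B.ncard = k)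
    (hB : M.IsBase B) (he : e ∈ B) :
    ∃ I, M.IsBasis I (M.closure (B \ {e})) ∧ I.ncard = k - 1 :=
  ⟨B \ {e}, (hB.indep.subset Set.sdiff_subset).isBasis_closure,
    by rw [Set.ncard_sdiff_singleton_of_mem he, hrk B hB]⟩

lemma IsBase.exists_isBase_ground_sdiff_subset_closure (hB : M.IsBase B) :
    ∃ B', M.IsBase B' ∧ M.E \ B ⊆ M.closure (B' \ B) := by
  obtain ⟨J, hJ⟩ := M.exists_isBasis (M.E \ B) Set.sdiff_subset
  obtain ⟨B', hB', hJB', -⟩ := hJ.indep.exists_isBase_subset_union_isBase hB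
  have hJsub : J ⊆ B' \ B := fun x hx ↦ ⟨hJB' hx, (hJ.subset hx).2⟩
  exact ⟨B', hB', hJ.subset_closure.trans (M.closure_subset_closure hJsub)⟩

lemma IsBase.isHalfColoop_of_mem_inter (hrk : ∀ B, M.IsBase B → B.ncard = k)
    (hB : M.IsBase B) (hB' : M.IsBase B') (heB : e ∈ B) (heB' : e ∈ B')
    (hspan : M.E \ B ⊆ M.closure (B' \ {e})) : M.IsHalfColoop k e := by
  refine ⟨M.closure (B' \ {e}), M.closure (B \ {e}), M.isFlat_closure _, M.isFlat_closure _,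
    hB'.exists_isBasis_closure_sdiff_singleton hrk heB',
    hB.exists_isBasis_closure_sdiff_singleton hrk heB, ?_⟩
  refine (Set.union_subset (hB'.indep.closure_sdiff_singleton_subset heB')
    (hB.indep.closure_sdiff_singleton_subset heB)).antisymm ?_
  rintro x ⟨hxE, hxe⟩
  by_cases hxB : x ∈ B
  · exact Or.inr (M.subset_closure _ (Set.sdiff_subset.trans hB.subset_ground) ⟨hxB, hxe⟩)
  · exact Or.inl (hspan ⟨hxE, hxB⟩)

end Matroid

theorem disjoint_basis_of_no_halfColoop_general {α : Type*} (M : Matroid α) (k : ℕ)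
    (hrk : ∀ B : Set α, M.IsBase B → B.ncard = k)
    (hnohc : ¬ ∃ e ∈ M.E, M.IsHalfColoop k e) :
    ∀ B : Set α, M.IsBase B → ∃ C : Set α, M.IsBase C ∧ B ∩ C = ∅ := by
  intro B hB
  obtain ⟨B', hB', hspan⟩ := hB.exists_isBase_ground_sdiff_subset_closure
  refine ⟨B', hB', Set.eq_empty_of_forall_notMem fun e ⟨heB, heB'⟩ ↦
    hnohc ⟨e, hB.subset_ground heB, ?_⟩⟩
  have hsub : B' \ B ⊆ B' \ {e} := Set.sdiff_subset_sdiff_right (Set.singleton_subset_iff.2 heB)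
  exact hB.isHalfColoop_of_mem_inter hrk hB' heB heB' (hspan.trans (M.closure_subset_closure hsub))

/-- A matroid of rank `k` on a finite ground set with no half-coloop
has the disjoint basis property: every basis is disjoint from some other basis. -/
theorem disjoint_basis_of_no_halfColoop {α : Type*} (M : Matroid α) (k : ℕ)
    (hfin : M.E.Finite) (hrk : ∀ B : Set α, M.IsBase B → B.ncard = k)
    (hnohc : ¬ ∃ e ∈ M.E, M.IsHalfColoop k e) :
    ∀ B : Set α, M.IsBase B → ∃ C : Set α, M.IsBase C ∧ B ∩ C = ∅ :=
  disjoint_basis_of_no_halfColoop_general M k hrk hnohc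
end

section
/- Let K be a field, n ≥ 1, and A an m×n matrix over K. The following are equivalent: (i) A has rank n−1 and there exists λ ∈ K^n with all entries nonzero such that A·λ = 0; (ii) A has rank strictly less than n and, for every j ∈ {1,…,n}, the m×(n−1) submatrix of A obtained by deleting column j has rank n−1. -/
/-!
If `A λ = 0` with `λ j ≠ 0`, column `j` of `A` is a combination of the others, so deleting it
keeps the column space and hence the rank. Conversely, a deleted-column submatrix of rank `n`
has independent columns, so a nonzero kernel vector of `A` (which exists since `rank A ≤ n`)
cannot vanish at any coordinate `j`; and `rank A ≥ n` because deleting a column cannot raise it.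
-/

namespace Matrix

section Field

variable {K m n : Type*} [Field K] [Fintype n]

theorem rank_eq_card_iff_linearIndependent_col {A : Matrix m n K} :
    A.rank = Fintype.card n ↔ LinearIndependent K A.col := by
  rw [rank_eq_finrank_span_cols, linearIndependent_iff_card_eq_finrank_span, eq_comm, Set.finrank]

theorem mulVec_injective_iff_rank_eq_card {A : Matrix m n K} :
    Function.Injective A.mulVec ↔ A.rank = Fintype.card n := by
  rw [mulVec_injective_iff, rank_eq_card_iff_linearIndependent_col]

theorem exists_mulVec_eq_zero_of_rank_lt_card {A : Matrix m n K} (h : A.rank < Fintype.card n) :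
    ∃ v ≠ 0, A *ᵥ v = 0 := by
  by_contra! hinj
  refine h.ne (mulVec_injective_iff_rank_eq_card.mp ?_)
  rw [← coe_mulVecLin, ← LinearMap.ker_eq_bot, ker_mulVecLin_eq_bot_iff]
  exact fun v hv => not_not.mp fun hv0 => hinj v hv0 hv

end Field

section DeleteColumn

variable {R m : Type*} {n : ℕ}

theorem submatrix_succAbove_mulVec [NonUnitalNonAssocSemiring R]
    (A : Matrix m (Fin (n + 1)) R) (j : Fin (n + 1)) (v : Fin n → R) :
    A.submatrix id j.succAbove *ᵥ v = A *ᵥ j.insertNth 0 v := by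
  ext i
  simp [mulVec, dotProduct, Fin.sum_univ_succAbove _ j]

theorem submatrix_succAbove_mulVec_removeNth [NonUnitalNonAssocSemiring R]
    (A : Matrix m (Fin (n + 1)) R) {j : Fin (n + 1)} {v : Fin (n + 1) → R} (hv : v j = 0) :
    A.submatrix id j.succAbove *ᵥ j.removeNth v = A *ᵥ v := by
  rw [submatrix_succAbove_mulVec, ← hv, Fin.insertNth_self_removeNth]

variable {K : Type*} [Field K]

theorem rank_submatrix_succAbove_of_mulVec_eq_zero {A : Matrix m (Fin (n + 1)) K}
    {lam : Fin (n + 1) → K} (hlam : A *ᵥ lam = 0) {j : Fin (n + 1)} (hj : lam j ≠ 0) :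
    (A.submatrix id j.succAbove).rank = A.rank := by
  refine le_antisymm (A.rank_submatrix_le id _) (Submodule.finrank_mono ?_)
  rintro _ ⟨v, rfl⟩
  -- subtracting a multiple of `lam` kills the `j`-th coordinate without changing `A *ᵥ v`
  have hw : (v - (v j / lam j) • lam) j = 0 := by simp [div_mul_cancel₀ _ hj]
  refine ⟨j.removeNth (v - (v j / lam j) • lam), ?_⟩
  simp [submatrix_succAbove_mulVec_removeNth A hw, mulVec_sub, mulVec_smul, hlam]

theorem apply_ne_zero_of_rank_submatrix_succAbove {A : Matrix m (Fin (n + 1)) K}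
    {j : Fin (n + 1)} (hj : (A.submatrix id j.succAbove).rank = n)
    {v : Fin (n + 1) → K} (hv : A *ᵥ v = 0) (hv0 : v ≠ 0) : v j ≠ 0 := by
  intro hvj
  have hinj := mulVec_injective_iff_rank_eq_card.mpr (hj.trans (Fintype.card_fin n).symm)
  have hremove : j.removeNth v = 0 :=
    hinj ((submatrix_succAbove_mulVec_removeNth A hvj).trans (hv.trans (mulVec_zero _).symm))
  exact hv0 (by rw [← Fin.insertNth_self_removeNth j v, hvj, hremove]; simp)

end DeleteColumn

end Matrix

open Matrix

/-- For an `m × n` matrix `A` over a field `K` (with `n ≥ 1`, written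
here as `n + 1` columns), the following are equivalent: (i) `A` has rank `n - 1` and
there is a vector `λ` with all entries nonzero such that `A·λ = 0`; (ii) `A` has rank
strictly less than `n` and every submatrix of `A` obtained by deleting one column has
rank `n - 1`. -/
theorem rank_deficient_torus_kernel_iff {K : Type*} [Field K] {m n : ℕ}
    (A : Matrix (Fin m) (Fin (n + 1)) K) :
    (A.rank = n ∧ ∃ lam : Fin (n + 1) → K, (∀ i, lam i ≠ 0) ∧ A.mulVec lam = 0) ↔
      (A.rank < n + 1 ∧ ∀ j : Fin (n + 1), (A.submatrix id j.succAbove).rank = n) := by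
  constructor
  · rintro ⟨hr, lam, hlam, hAlam⟩
    exact ⟨hr.trans_lt n.lt_succ_self,
      fun j => (rank_submatrix_succAbove_of_mulVec_eq_zero hAlam (hlam j)).trans hr⟩
  · rintro ⟨hlt, hsub⟩
    have hr : A.rank = n :=
      le_antisymm (Nat.le_of_lt_succ hlt) ((hsub 0).symm.trans_le (A.rank_submatrix_le id _))
    obtain ⟨lam, hlam0, hAlam⟩ :=
      exists_mulVec_eq_zero_of_rank_lt_card (hlt.trans_eq (Fintype.card_fin _).symm)
    exact ⟨hr, lam, fun j => apply_ne_zero_of_rank_submatrix_succAbove (hsub j) hAlam hlam0, hAlam⟩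
end

section
/- Let K be a field with at least 3 elements and let X be a 2×n matrix over K of rank 2 with no zero column, such that the columns of X fall into exactly r parallel classes (two columns are parallel when one is a nonzero scalar multiple of the other) with r ∈ {2,3}, and each parallel class contains at least 2 columns. Then X is self-projecting: there exists λ ∈ (K^*)^n with X·diag(λ)·Xᵀ = 0. -/
/-!
Each parallel class is self-projecting on its own: if the columns of a class are `cⱼ • x`,
then their contribution to `X · diag(λ) · Xᵀ` is `(∑ⱼ λⱼ cⱼ²) • x xᵀ`, so it suffices to find, on
every class, nonzero weights `wⱼ` with `∑ⱼ wⱼ = 0` and to put `λⱼ = wⱼ / cⱼ²`. With three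
distinct field elements, every `t` is a sum `u + v` of two nonzero elements, and inserting
one element at a time shows that on any set of at least two indices every `t` is a sum of
nonzero terms.
-/

open Finset Matrix

theorem exists_ne_zero_ne_zero_add_eq {G : Type*} [AddCommGroup G]
    (hG : ∃ a b c : G, a ≠ b ∧ a ≠ c ∧ b ≠ c) (t : G) :
    ∃ u v : G, u ≠ 0 ∧ v ≠ 0 ∧ u + v = t := by
  obtain ⟨a, b, c, hab, hac, hbc⟩ := hG
  by_cases h : a - c = t
  · exact ⟨b - c, a - b, sub_ne_zero.mpr hbc, sub_ne_zero.mpr hab, by rw [← h]; abel⟩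
  · exact ⟨a - c, t - (a - c), sub_ne_zero.mpr hac, sub_ne_zero.mpr (Ne.symm h),
      add_sub_cancel _ _⟩

theorem Finset.exists_forall_ne_zero_sum_eq {ι G : Type*} [AddCommGroup G]
    (hG : ∃ a b c : G, a ≠ b ∧ a ≠ c ∧ b ≠ c) {s : Finset ι} (hs : 2 ≤ #s) (t : G) :
    ∃ w : ι → G, (∀ j, w j ≠ 0) ∧ ∑ j ∈ s, w j = t := by
  classical
  induction s using Finset.induction_on generalizing t with
  | empty => simp at hs
  | insert a s ha ih =>
    obtain ⟨u, v, hu, hv, rfl⟩ := exists_ne_zero_ne_zero_add_eq hG t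
    obtain ⟨w, hw, hsum⟩ : ∃ w : ι → G, (∀ j, w j ≠ 0) ∧ ∑ j ∈ s, w j = v := by
      rw [card_insert_of_notMem ha] at hs
      obtain hs | hs := (Nat.le_of_lt_succ hs).eq_or_lt'
      · obtain ⟨b, rfl⟩ := card_eq_one.mp hs
        exact ⟨fun _ => v, fun _ => hv, sum_singleton _ _⟩
      · exact ih hs v
    refine ⟨Function.update w a u, fun j => ?_, ?_⟩
    · rcases eq_or_ne j a with rfl | hj
      · simpa using hu
      · simpa [hj] using hw j
    · rw [sum_insert ha, Function.update_self, sum_update_of_notMem ha, hsum]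

theorem exists_forall_ne_zero_fiberwise_sum_eq_zero {ι κ G : Type*} [Fintype ι] [DecidableEq κ]
    [AddCommGroup G] (hG : ∃ a b c : G, a ≠ b ∧ a ≠ c ∧ b ≠ c) (P : ι → κ)
    (hP : ∀ a, 2 ≤ #{j | P j = a}) :
    ∃ w : ι → G, (∀ j, w j ≠ 0) ∧ ∀ a, ∑ j with P j = a, w j = 0 := by
  choose w hw hsum using fun a => exists_forall_ne_zero_sum_eq hG (hP a) 0
  refine ⟨fun j => w (P j) j, fun j => hw _ _, fun a => ?_⟩
  rw [← hsum a]
  exact sum_congr rfl fun j hj => by simp only [(mem_filter.mp hj).2]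

namespace Matrix

variable {m n κ R : Type*}

def IsSelfProjecting [Fintype n] [DecidableEq n] [Field R] (X : Matrix m n R) : Prop :=
  ∃ d : n → R, (∀ j, d j ≠ 0) ∧ X * diagonal d * Xᵀ = 0

theorem mul_diagonal_mul_transpose_apply [Fintype n] [DecidableEq n] [CommSemiring R]
    (X : Matrix m n R) (d : n → R) (i k : m) :
    (X * diagonal d * Xᵀ) i k = ∑ j, d j * (X i j * X k j) := by
  rw [mul_apply]
  simp only [mul_diagonal, transpose_apply]
  exact sum_congr rfl fun _ _ => by ring

theorem mul_diagonal_mul_transpose_eq_zero_of_col_eq_smul [Fintype n] [DecidableEq n]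
    [Fintype κ] [DecidableEq κ] [CommSemiring R] {X : Matrix m n R} (P : n → κ)
    (x : κ → m → R) (c : n → R) (hcol : ∀ j, (fun i => X i j) = c j • x (P j)) {d : n → R}
    (hd : ∀ a, ∑ j with P j = a, d j * c j ^ 2 = 0) :
    X * diagonal d * Xᵀ = 0 := by
  ext i k
  have hterm : ∀ j, d j * (X i j * X k j) = d j * c j ^ 2 * (x (P j) i * x (P j) k) := by
    intro j
    rw [show X i j = c j * x (P j) i from congrFun (hcol j) i,
      show X k j = c j * x (P j) k from congrFun (hcol j) k]
    ring
  rw [mul_diagonal_mul_transpose_apply, zero_apply, ← sum_fiberwise univ P]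
  refine sum_eq_zero fun a _ => ?_
  calc ∑ j with P j = a, d j * (X i j * X k j)
      = ∑ j with P j = a, d j * c j ^ 2 * (x a i * x a k) :=
        sum_congr rfl fun j hj => by rw [hterm, (mem_filter.mp hj).2]
    _ = 0 := by rw [← sum_mul, hd a, zero_mul]

theorem isSelfProjecting_of_two_le_card_parallelClass [Fintype n] [DecidableEq n] [Fintype κ]
    [DecidableEq κ] [Field R] (hR : ∃ a b c : R, a ≠ b ∧ a ≠ c ∧ b ≠ c) (X : Matrix m n R)
    (P : n → κ)
    (hpar : ∀ j j', P j = P j' → ∃ c : R, c ≠ 0 ∧ (fun i => X i j') = c • (fun i => X i j))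
    (hP : ∀ a, 2 ≤ #{j | P j = a}) :
    X.IsSelfProjecting := by
  have hne : ∀ a, ∃ j, P j = a := fun a => by
    obtain ⟨j, hj⟩ := card_pos.mp (lt_of_lt_of_le two_pos (hP a))
    exact ⟨j, (mem_filter.mp hj).2⟩
  choose rep hrep using hne
  choose c hc hcol using fun j => hpar (rep (P j)) j (hrep (P j))
  obtain ⟨w, hw, hsum⟩ := exists_forall_ne_zero_fiberwise_sum_eq_zero hR P hP
  refine ⟨fun j => w j / c j ^ 2, fun j => div_ne_zero (hw j) (pow_ne_zero 2 (hc j)), ?_⟩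
  refine mul_diagonal_mul_transpose_eq_zero_of_col_eq_smul P (fun a i => X i (rep a)) c hcol
    fun a => ?_
  rw [← hsum a]
  exact sum_congr rfl fun j _ => div_mul_cancel₀ _ (pow_ne_zero 2 (hc j))

end Matrix

theorem rank_two_parallel_classes_selfProjecting_general {K : Type*} [Field K]
    (h3 : ∃ a b c : K, a ≠ b ∧ a ≠ c ∧ b ≠ c)
    {n r : ℕ} (X : Matrix (Fin 2) (Fin n) K)
    (P : Fin n → Fin r)
    (hpar : ∀ j j' : Fin n, P j = P j' ↔
      ∃ c : K, c ≠ 0 ∧ (fun i => X i j') = c • (fun i => X i j))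
    (hbig : ∀ a : Fin r, 2 ≤ {j : Fin n | P j = a}.ncard) :
    ∃ lam : Fin n → K, (∀ i, lam i ≠ 0) ∧ X * Matrix.diagonal lam * X.transpose = 0 :=
  X.isSelfProjecting_of_two_le_card_parallelClass h3 P (fun j j' => (hpar j j').mp)
    fun a => by simpa [Set.ncard_eq_toFinset_card'] using hbig a

/-- Let `K` be a field with at least 3 elements and `X` a `2 × n`
matrix over `K` of rank 2 with no zero column, whose columns fall into exactly `r`
parallel classes with `r ∈ {2,3}` (recorded by a surjective class map `P` such that
two columns have the same class iff they are parallel), each class containing at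
least 2 columns. Then `X` is self-projecting: there exists `λ ∈ (K^*)^n` with
`X · diag(λ) · Xᵀ = 0`. -/
theorem rank_two_parallel_classes_selfProjecting {K : Type*} [Field K]
    (h3 : ∃ a b c : K, a ≠ b ∧ a ≠ c ∧ b ≠ c)
    {n r : ℕ} (X : Matrix (Fin 2) (Fin n) K) (hrank : X.rank = 2)
    (hnz : ∀ j : Fin n, (fun i => X i j) ≠ 0)
    (hr : r = 2 ∨ r = 3)
    (P : Fin n → Fin r) (hsurj : Function.Surjective P)
    (hpar : ∀ j j' : Fin n, P j = P j' ↔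
      ∃ c : K, c ≠ 0 ∧ (fun i => X i j') = c • (fun i => X i j))
    (hbig : ∀ a : Fin r, 2 ≤ {j : Fin n | P j = a}.ncard) :
    ∃ lam : Fin n → K, (∀ i, lam i ≠ 0) ∧ X * Matrix.diagonal lam * X.transpose = 0 :=
  rank_two_parallel_classes_selfProjecting_general h3 X P hpar hbig
end
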